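/- Let (Ω, 𝔄, P) be a probability space, let δ, B be real constants with 0 < δ ≤ B, and let μ₀, μ̂, g₀, ĝ : Ω → ℝ be measurable functions such that μ₀ − μ̂ ∈ L²(P), 0 ≤ g₀ ≤ B pointwise, and δ ≤ ĝ ≤ B pointwise. Then ∫ (μ₀ − μ̂)·(g₀/ĝ) dP + ∫ (μ̂ − μ₀) dP = ∫ (μ₀ − μ̂)·(g₀ − ĝ)/ĝ dP, and moreover |∫ (μ₀ − μ̂)·(g₀ − ĝ)/ĝ dP| ≤ δ⁻¹·‖μ₀ − μ̂‖_{L²(P)}·‖g₀ − ĝ‖_{L²(P)}. -/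

import Mathlib

/-!
Since `g₀ / ĝ - 1 = (g₀ - ĝ) / ĝ`, the identity is linearity of the integral; both integrals
exist because `g₀ / ĝ` is bounded by `B / δ`. For the bound, `1 / ĝ ≤ δ⁻¹` pointwise, and the
remaining `∫ |μ₀ - μ̂| |g₀ - ĝ| dP` is controlled by the Cauchy–Schwarz inequality, `g₀ - ĝ`
being bounded and hence in `L²(P)`.
-/

open MeasureTheory

/-- The `L²(P)` norm `‖f‖_{L²(P)} = (∫ f² dP)^{1/2}`. -/
noncomputable def L2norm {Ω : Type*} [MeasurableSpace Ω] (P : Measure Ω) (f : Ω → ℝ) : ℝ :=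
  (∫ x, (f x) ^ 2 ∂P) ^ ((1 : ℝ) / 2)

section

variable {Ω : Type*} [MeasurableSpace Ω] {P : Measure Ω}

theorem integrable_mul_div_of_bounds {f g w : Ω → ℝ} {δ B : ℝ} (hf : Integrable f P)
    (hg : Measurable g) (hw : Measurable w) (hδ : 0 < δ)
    (hgB : ∀ x, 0 ≤ g x ∧ g x ≤ B) (hwδ : ∀ x, δ ≤ w x) :
    Integrable (fun x => f x * (g x / w x)) P := by
  refine hf.mul_bdd (c := B / δ) (hg.div hw).aestronglyMeasurable (ae_of_all _ fun x => ?_)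
  have hw_pos : 0 < w x := hδ.trans_le (hwδ x)
  rw [Real.norm_eq_abs, abs_div, abs_of_nonneg (hgB x).1, abs_of_pos hw_pos]
  exact div_le_div₀ ((hgB x).1.trans (hgB x).2) (hgB x).2 hδ (hwδ x)

theorem integral_mul_div_add_integral_sub_eq {a b g w : Ω → ℝ}
    (hab : Integrable (fun x => a x - b x) P)
    (habgw : Integrable (fun x => (a x - b x) * (g x / w x)) P) (hw : ∀ x, w x ≠ 0) :
    (∫ x, (a x - b x) * (g x / w x) ∂P) + ∫ x, (b x - a x) ∂P =
      ∫ x, (a x - b x) * (g x - w x) / w x ∂P := by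
  have hba : Integrable (fun x => b x - a x) P := by simpa only [neg_sub] using hab.fun_neg
  rw [← integral_add habgw hba]
  congr 1
  funext x
  field_simp [hw x]
  ring

theorem integral_abs_mul_abs_le_L2norm_mul {f g : Ω → ℝ} (hf : MemLp f 2 P) (hg : MemLp g 2 P) :
    ∫ x, |f x| * |g x| ∂P ≤ L2norm P f * L2norm P g := by
  have h := integral_mul_norm_le_Lp_mul_Lq Real.HolderConjugate.two_two
    (by simpa using hf) (by simpa using hg)
  simpa [L2norm, Real.norm_eq_abs, sq_abs] using h

theorem abs_mul_div_le_inv_mul {a b c δ : ℝ} (hδ : 0 < δ) (hδc : δ ≤ c) :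
    |a * b / c| ≤ δ⁻¹ * (|a| * |b|) := by
  rw [abs_div, abs_mul, abs_of_pos (hδ.trans_le hδc), div_eq_inv_mul]
  exact mul_le_mul_of_nonneg_right (inv_anti₀ hδ hδc) (by positivity)

theorem abs_integral_mul_div_le {f h w : Ω → ℝ} {δ : ℝ} (hδ : 0 < δ)
    (hf : MemLp f 2 P) (hh : MemLp h 2 P) (hw : ∀ x, δ ≤ w x) :
    |∫ x, f x * h x / w x ∂P| ≤ δ⁻¹ * L2norm P f * L2norm P h := by
  have hfh : Integrable (fun x => |f x| * |h x|) P := hf.abs.integrable_mul hh.abs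
  calc |∫ x, f x * h x / w x ∂P|
      ≤ ∫ x, δ⁻¹ * (|f x| * |h x|) ∂P := by
        rw [← Real.norm_eq_abs]
        exact norm_integral_le_of_norm_le (hfh.const_mul _)
          (ae_of_all _ fun x => abs_mul_div_le_inv_mul hδ (hw x))
    _ = δ⁻¹ * ∫ x, |f x| * |h x| ∂P := integral_const_mul _ _
    _ ≤ δ⁻¹ * (L2norm P f * L2norm P h) :=
        mul_le_mul_of_nonneg_left (integral_abs_mul_abs_le_L2norm_mul hf hh) (by positivity)
    _ = δ⁻¹ * L2norm P f * L2norm P h := (mul_assoc _ _ _).symm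

end

theorem doubly_robust_remainder_general {Ω : Type*} [MeasurableSpace Ω]
    (P : Measure Ω) [IsProbabilityMeasure P]
    (δ B : ℝ) (hδ : 0 < δ)
    (μ₀ μh g₀ gh : Ω → ℝ)
    (hg₀m : Measurable g₀) (hghm : Measurable gh)
    (hL2 : MemLp (fun x => μ₀ x - μh x) 2 P)
    (hg₀b : ∀ x, 0 ≤ g₀ x ∧ g₀ x ≤ B)
    (hghb : ∀ x, δ ≤ gh x ∧ gh x ≤ B) :
    ((∫ x, (μ₀ x - μh x) * (g₀ x / gh x) ∂P) + ∫ x, (μh x - μ₀ x) ∂P =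
        ∫ x, (μ₀ x - μh x) * (g₀ x - gh x) / gh x ∂P) ∧
      |∫ x, (μ₀ x - μh x) * (g₀ x - gh x) / gh x ∂P| ≤
        δ⁻¹ * L2norm P (fun x => μ₀ x - μh x) * L2norm P (fun x => g₀ x - gh x) := by
  have hgh_pos : ∀ x, 0 < gh x := fun x => hδ.trans_le (hghb x).1
  have hdiff : MemLp (fun x => g₀ x - gh x) 2 P :=
    MemLp.of_bound (hg₀m.sub hghm).aestronglyMeasurable B <| ae_of_all _ fun x =>
      abs_sub_le_of_nonneg_of_le (hg₀b x).1 (hg₀b x).2 (hgh_pos x).le (hghb x).2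
  have hμ_int := hL2.integrable one_le_two
  have hratio := integrable_mul_div_of_bounds hμ_int hg₀m hghm hδ hg₀b fun x => (hghb x).1
  exact ⟨integral_mul_div_add_integral_sub_eq hμ_int hratio fun x => (hgh_pos x).ne',
    abs_integral_mul_div_le hδ hL2 hdiff fun x => (hghb x).1⟩

/-- Doubly robust second-order decomposition and Cauchy–Schwarz bound:
`∫ (μ₀ − μ̂)(g₀/ĝ) dP + ∫ (μ̂ − μ₀) dP = ∫ (μ₀ − μ̂)(g₀ − ĝ)/ĝ dP` and
`|∫ (μ₀ − μ̂)(g₀ − ĝ)/ĝ dP| ≤ δ⁻¹‖μ₀ − μ̂‖_{L²(P)}‖g₀ − ĝ‖_{L²(P)}`. -/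
theorem doubly_robust_remainder {Ω : Type*} [MeasurableSpace Ω]
    (P : Measure Ω) [IsProbabilityMeasure P]
    (δ B : ℝ) (hδ : 0 < δ) (hδB : δ ≤ B)
    (μ₀ μh g₀ gh : Ω → ℝ)
    (hμ₀m : Measurable μ₀) (hμhm : Measurable μh)
    (hg₀m : Measurable g₀) (hghm : Measurable gh)
    (hL2 : MemLp (fun x => μ₀ x - μh x) 2 P)
    (hg₀b : ∀ x, 0 ≤ g₀ x ∧ g₀ x ≤ B)
    (hghb : ∀ x, δ ≤ gh x ∧ gh x ≤ B) :
    ((∫ x, (μ₀ x - μh x) * (g₀ x / gh x) ∂P) + ∫ x, (μh x - μ₀ x) ∂P =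
        ∫ x, (μ₀ x - μh x) * (g₀ x - gh x) / gh x ∂P) ∧
      |∫ x, (μ₀ x - μh x) * (g₀ x - gh x) / gh x ∂P| ≤
        δ⁻¹ * L2norm P (fun x => μ₀ x - μh x) * L2norm P (fun x => g₀ x - gh x) :=
  doubly_robust_remainder_general P δ B hδ μ₀ μh g₀ gh hg₀m hghm hL2 hg₀b hghb
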